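/- arXiv:2112.12291 — 6 statements merged into one kernel-verified Lean document; each statement's English description precedes it below -/
import Mathlib

section
/- For every positive integer n there exists a unique function c_n from the set of positive divisors of n to ℚ such that for every divisor t of n one has Σ_{d ∣ n} c_n(d) · gcd(t,d) = n/t. (Equivalently, the matrix (gcd(t,d))_{t,d ∣ n}, indexed by the divisors of n, is invertible over ℚ.) -/
open Finset

lemma gcd_eq_sum_tot {n t d : ℕ} (hn : 0 < n) (ht : t ∣ n) (hd : d ∣ n) :
    (Nat.gcd t d : ℚ) = ∑ e ∈ n.divisors, if e ∣ t ∧ e ∣ d then (Nat.totient e : ℚ) else 0 := by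
  rw [← Finset.sum_filter]
  have h1 : n.divisors.filter (fun e => e ∣ t ∧ e ∣ d) = (Nat.gcd t d).divisors := by
    ext e
    simp only [Finset.mem_filter, Nat.mem_divisors, Nat.dvd_gcd_iff]
    constructor
    · rintro ⟨⟨_, hn0⟩, het, hed⟩
      exact ⟨⟨het, hed⟩, by
        intro h
        have h2 := Nat.eq_zero_of_gcd_eq_zero_left h
        have h3 : 0 < t := Nat.pos_of_dvd_of_pos ht hn
        omega⟩
    · rintro ⟨⟨het, hed⟩, _⟩
      exact ⟨⟨het.trans ht, hn.ne'⟩, het, hed⟩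
  rw [h1, ← Nat.cast_sum, Nat.sum_totient]

lemma inj_lemma (n : ℕ) (hn : 0 < n) (c : ℕ → ℚ)
    (h : ∀ t ∈ n.divisors, ∑ d ∈ n.divisors, c d * (Nat.gcd t d : ℚ) = 0) :
    ∀ d ∈ n.divisors, c d = 0 := by
  -- the quadratic form computation
  have big : ∑ e ∈ n.divisors, (Nat.totient e : ℚ) *
      (∑ d ∈ n.divisors, if e ∣ d then c d else 0) ^ 2 = 0 := by
    have h0 : ∑ t ∈ n.divisors, c t * ∑ d ∈ n.divisors, c d * (Nat.gcd t d : ℚ) = 0 := by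
      rw [Finset.sum_eq_zero]
      intro t ht
      rw [h t ht, mul_zero]
    calc ∑ e ∈ n.divisors, (Nat.totient e : ℚ) *
          (∑ d ∈ n.divisors, if e ∣ d then c d else 0) ^ 2
        = ∑ e ∈ n.divisors, ∑ t ∈ n.divisors, ∑ d ∈ n.divisors,
            (if e ∣ t then c t else 0) * (if e ∣ d then c d else 0) * (Nat.totient e : ℚ) := by
          refine Finset.sum_congr rfl fun e _ => ?_
          rw [sq, Finset.sum_mul_sum, Finset.mul_sum]
          refine Finset.sum_congr rfl fun t _ => ?_
          rw [Finset.mul_sum]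
          refine Finset.sum_congr rfl fun d _ => ?_
          ring
      _ = ∑ t ∈ n.divisors, ∑ e ∈ n.divisors, ∑ d ∈ n.divisors,
            (if e ∣ t then c t else 0) * (if e ∣ d then c d else 0) * (Nat.totient e : ℚ) :=
          Finset.sum_comm
      _ = ∑ t ∈ n.divisors, ∑ d ∈ n.divisors, ∑ e ∈ n.divisors,
            (if e ∣ t then c t else 0) * (if e ∣ d then c d else 0) * (Nat.totient e : ℚ) :=
          Finset.sum_congr rfl fun t _ => Finset.sum_comm
      _ = ∑ t ∈ n.divisors, c t * ∑ d ∈ n.divisors, c d * (Nat.gcd t d : ℚ) := by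
          refine Finset.sum_congr rfl fun t ht => ?_
          rw [Finset.mul_sum]
          refine Finset.sum_congr rfl fun d hd => ?_
          rw [gcd_eq_sum_tot hn (Nat.dvd_of_mem_divisors ht) (Nat.dvd_of_mem_divisors hd),
            Finset.mul_sum, Finset.mul_sum]
          refine Finset.sum_congr rfl fun e _ => ?_
          by_cases h1 : e ∣ t <;> by_cases h2 : e ∣ d <;> simp [h1, h2] <;> ring
      _ = 0 := h0
  have S0 : ∀ e ∈ n.divisors, (∑ d ∈ n.divisors, if e ∣ d then c d else 0) = 0 := by
    intro e he
    have hnn : ∀ e ∈ n.divisors, 0 ≤ (Nat.totient e : ℚ) *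
        (∑ d ∈ n.divisors, if e ∣ d then c d else 0) ^ 2 := by
      intro e _
      positivity
    have := (Finset.sum_eq_zero_iff_of_nonneg hnn).mp big e he
    have hφ : 0 < Nat.totient e := Nat.totient_pos.mpr (Nat.pos_of_mem_divisors he)
    have : (∑ d ∈ n.divisors, if e ∣ d then c d else 0) ^ 2 = 0 := by
      have hφ' : (Nat.totient e : ℚ) ≠ 0 := by positivity
      exact (mul_eq_zero.mp this).resolve_left hφ'
    exact pow_eq_zero_iff (by norm_num) |>.mp this
  -- downward induction
  have key : ∀ m : ℕ, ∀ d ∈ n.divisors, n < d + m → c d = 0 := by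
    intro m
    induction m with
    | zero =>
      intro d hd hlt
      have := Nat.le_of_dvd hn (Nat.dvd_of_mem_divisors hd)
      omega
    | succ m ih =>
      intro d hd hlt
      have hS := S0 d hd
      rw [← Finset.sum_filter] at hS
      rw [Finset.sum_eq_single_of_mem d (by simp [Finset.mem_filter, hd])] at hS
      · exact hS
      · intro b hb hne
        simp only [Finset.mem_filter] at hb
        obtain ⟨hbmem, hdvd⟩ := hb
        apply ih b hbmem
        have hb0 : 0 < b := Nat.pos_of_mem_divisors hbmem
        have hd0 : 0 < d := Nat.pos_of_mem_divisors hd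
        obtain ⟨k, rfl⟩ := hdvd
        have hk : 2 ≤ k := by
          rcases Nat.lt_or_ge k 2 with hk | hk
          · interval_cases k <;> omega
          · exact hk
        nlinarith
  intro d hd
  exact key (n + 1) d hd (by omega)

/-- For every positive integer `n` there is a unique ℚ-valued function `c` supported on the
divisors of `n` such that `∑_{d ∣ n} c d * gcd t d = n / t` for every divisor `t` of `n`. -/
theorem gcd_matrix_invertible (n : ℕ) (hn : 0 < n) :
    ∃! c : ℕ → ℚ, (∀ d, d ∉ n.divisors → c d = 0) ∧
      ∀ t ∈ n.divisors, ∑ d ∈ n.divisors, c d * (Nat.gcd t d : ℚ) = (n : ℚ) / (t : ℚ) := by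
  classical
  set M : Matrix n.divisors n.divisors ℚ :=
    fun t d => (Nat.gcd (t : ℕ) (d : ℕ) : ℚ) with hM
  -- key translation: for v : divisors → ℚ extended by 0, mulVec equals the divisor sum
  have htrans : ∀ (v : n.divisors → ℚ) (t : ℕ) (ht : t ∈ n.divisors),
      ∑ d ∈ n.divisors, (if h : d ∈ n.divisors then v ⟨d, h⟩ else 0) * (Nat.gcd t d : ℚ)
        = M.mulVec v ⟨t, ht⟩ := by
    intro v t ht
    rw [Matrix.mulVec, dotProduct, ← Finset.sum_coe_sort n.divisors]
    refine Finset.sum_congr rfl fun d _ => ?_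
    rw [dif_pos d.2, mul_comm]
  have hinj : Function.Injective M.mulVecLin := by
    rw [← LinearMap.ker_eq_bot, LinearMap.ker_eq_bot']
    intro v hv
    set c : ℕ → ℚ := fun d => if h : d ∈ n.divisors then v ⟨d, h⟩ else 0 with hc
    have hz : ∀ d ∈ n.divisors, c d = 0 := by
      apply inj_lemma n hn
      intro t ht
      rw [hc, htrans v t ht, ← Matrix.mulVecLin_apply, hv]
      rfl
    funext d
    have h2 := hz d d.2
    rw [show c (d : ℕ) = v ⟨(d : ℕ), d.2⟩ from dif_pos d.2] at h2
    exact h2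
  have hsurj := (LinearMap.injective_iff_surjective).mp hinj
  obtain ⟨v, hv⟩ := hsurj (fun t => (n : ℚ) / ((t : ℕ) : ℚ))
  set c : ℕ → ℚ := fun d => if h : d ∈ n.divisors then v ⟨d, h⟩ else 0 with hc
  refine ⟨c, ⟨fun d hd => dif_neg hd, fun t ht => ?_⟩, ?_⟩
  · rw [hc, htrans v t ht, ← Matrix.mulVecLin_apply, hv]
  · rintro c' ⟨h1', h2'⟩
    have hdiff : ∀ d ∈ n.divisors, c' d - c d = 0 := by
      apply inj_lemma n hn
      intro t ht
      have e1 := h2' t ht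
      have e2 : ∑ d ∈ n.divisors, c d * (Nat.gcd t d : ℚ) = (n : ℚ) / (t : ℚ) := by
        rw [hc, htrans v t ht, ← Matrix.mulVecLin_apply, hv]
      calc ∑ d ∈ n.divisors, (c' d - c d) * (Nat.gcd t d : ℚ)
          = ∑ d ∈ n.divisors, (c' d * (Nat.gcd t d : ℚ) - c d * (Nat.gcd t d : ℚ)) :=
            Finset.sum_congr rfl fun d _ => by ring
        _ = 0 := by rw [Finset.sum_sub_distrib, e1, e2, sub_self]
    funext d
    by_cases hd : d ∈ n.divisors
    · have := hdiff d hd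
      linarith [this]
    · rw [h1' d hd]
      show (0 : ℚ) = if h : d ∈ n.divisors then v ⟨d, h⟩ else 0
      rw [dif_neg hd]
end

section
/- Let L be an even integral lattice and ν an isometry of L with ν^m = id for an odd positive integer m. Then for every α ∈ L the integer Σ_{k=0}^{m−1} ⟨α, ν^k α⟩ is even. Equivalently, m·⟨π_ν(α), π_ν(α)⟩ ∈ 2ℤ, where π_ν = (1/m) Σ_{k=0}^{m−1} ν^k is the projection of L ⊗_ℤ ℚ onto the ν-fixed subspace. -/
/-- If `ν` is an isometry of an even integral lattice with `ν^m = id` for odd `m`,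
then `∑_{k=0}^{m-1} ⟨α, ν^k α⟩` is even for every lattice vector `α`. -/
theorem even_lattice_odd_order_sum_even
    (L : Type*) [AddCommGroup L] [Module ℤ L] [Module.Free ℤ L] [Module.Finite ℤ L]
    (B : L →ₗ[ℤ] L →ₗ[ℤ] ℤ) (hsymm : ∀ x y, B x y = B y x)
    (heven : ∀ x, Even (B x x))
    (ν : L ≃ₗ[ℤ] L) (hiso : ∀ x y, B (ν x) (ν y) = B x y)
    (m : ℕ) (hmpos : 0 < m) (hmodd : Odd m)
    (hord : ∀ x, (ν ^ m) x = x) (α : L) :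
    Even (∑ k ∈ Finset.range m, B α ((ν ^ k) α)) := by
  haveI : NeZero m := ⟨hmpos.ne'⟩
  have hmul : ∀ (e f : L ≃ₗ[ℤ] L) (x : L), (e * f) x = e (f x) := fun _ _ _ => rfl
  have hpow : ∀ (j : ℕ) (x y : L), B ((ν ^ j) x) ((ν ^ j) y) = B x y := by
    intro j
    induction j with
    | zero => intro x y; simp
    | succ n ih =>
      intro x y
      rw [pow_succ', hmul, hmul, hiso, ih]
  have hfix : ∀ (q : ℕ) (x : L), ((ν ^ m) ^ q) x = x := by
    intro q
    induction q with
    | zero => intro x; simp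
    | succ n ih => intro x; rw [pow_succ', hmul, ih, hord]
  have hmod : ∀ (a : ℕ) (x : L), (ν ^ a) x = (ν ^ (a % m)) x := by
    intro a x
    conv_lhs => rw [← Nat.div_add_mod a m]
    rw [pow_add, pow_mul, hmul, hfix]
  set S := ∑ k ∈ Finset.range m, B α ((ν ^ k) α) with hS
  set β := ∑ k ∈ Finset.range m, (ν ^ k) α with hβ
  have key : B β β = m * S := by
    have h1 : B β = ∑ j ∈ Finset.range m, B ((ν ^ j) α) := by
      rw [hβ]; exact map_sum B _ _
    rw [h1, LinearMap.sum_apply, hβ]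
    have inner : ∀ j ∈ Finset.range m,
        (B ((ν ^ j) α)) (∑ k ∈ Finset.range m, (ν ^ k) α) = S := by
      intro j hj
      rw [map_sum]
      rw [← Fin.sum_univ_eq_sum_range (fun k => B ((ν ^ j) α) ((ν ^ k) α)) m]
      rw [hS, ← Fin.sum_univ_eq_sum_range (fun k => B α ((ν ^ k) α)) m]
      open Fin.NatCast in
      rw [← Equiv.sum_comp (Equiv.addRight (j : Fin m))
        (fun k : Fin m => B ((ν ^ (j:ℕ)) α) ((ν ^ (k:ℕ)) α))]
      apply Finset.sum_congr rfl
      intro k _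
      have hjm : j % m = j := Nat.mod_eq_of_lt (Finset.mem_range.mp hj)
      open Fin.NatCast in
      have hval : (((Equiv.addRight (j : Fin m)) k : Fin m) : ℕ) = (k.val + j) % m := by
        simp [Fin.add_def, Fin.val_natCast, hjm]
      open Fin.NatCast in
      show B ((ν ^ j) α) ((ν ^ (((Equiv.addRight (j : Fin m)) k : Fin m) : ℕ)) α)
          = B α ((ν ^ (k : ℕ)) α)
      rw [hval, ← hmod]
      have h2 : (ν ^ ((k : ℕ) + j)) α = (ν ^ j) ((ν ^ (k : ℕ)) α) := by
        rw [add_comm, pow_add]; rfl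
      rw [h2, hpow]
    rw [Finset.sum_congr rfl inner, Finset.sum_const, Finset.card_range, nsmul_eq_mul]
  have hEvenB : Even ((m : ℤ) * S) := key ▸ heven β
  rcases Int.even_mul.mp hEvenB with h | h
  · exact absurd (Int.even_coe_nat m |>.mp h) (Nat.not_even_iff_odd.mpr hmodd)
  · exact h
end

section
/- Let L be an even integral lattice and ν an isometry of L with ν^m = id for an even positive integer m. Then for every α ∈ L, Σ_{k=0}^{m−1} ⟨α, ν^k α⟩ ≡ ⟨α, ν^{m/2} α⟩ (mod 2). Equivalently, m·⟨π_ν(α), π_ν(α)⟩ is an integer congruent to ⟨α, ν^{m/2} α⟩ modulo 2, where π_ν = (1/m) Σ_{k=0}^{m−1} ν^k is the projection of L ⊗_ℤ ℚ onto the ν-fixed subspace. -/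
/-- If `ν` is an isometry of an even integral lattice with `ν^m = id` for even `m`,
then `∑_{k=0}^{m-1} ⟨α, ν^k α⟩ ≡ ⟨α, ν^{m/2} α⟩ (mod 2)` for every lattice vector `α`. -/
theorem even_lattice_even_order_sum_congr
    (L : Type*) [AddCommGroup L] [Module ℤ L] [Module.Free ℤ L] [Module.Finite ℤ L]
    (B : L →ₗ[ℤ] L →ₗ[ℤ] ℤ) (hsymm : ∀ x y, B x y = B y x)
    (heven : ∀ x, Even (B x x))
    (ν : L ≃ₗ[ℤ] L) (hiso : ∀ x y, B (ν x) (ν y) = B x y)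
    (m : ℕ) (hmpos : 0 < m) (hmeven : Even m)
    (hord : ∀ x, (ν ^ m) x = x) (α : L) :
    ∑ k ∈ Finset.range m, B α ((ν ^ k) α) ≡ B α ((ν ^ (m / 2)) α) [ZMOD 2] := by
  obtain ⟨n, hn⟩ := hmeven
  have hn2 : m / 2 = n := by omega
  have hnpos : 0 < n := by omega
  have hnm : n < m := by omega
  -- iterated isometry
  have hisoP : ∀ (j : ℕ) (x y : L), B ((ν ^ j) x) ((ν ^ j) y) = B x y := by
    intro j
    induction j with
    | zero => intro x y; simp
    | succ j ih =>
        intro x y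
        have h1 : ∀ z : L, (ν ^ (j + 1)) z = (ν ^ j) (ν z) := by
          intro z
          rw [pow_succ]
          rfl
        rw [h1, h1, ih, hiso]
  -- reflection symmetry of the summand
  have key : ∀ k ≤ m, B α ((ν ^ k) α) = B α ((ν ^ (m - k)) α) := by
    intro k hk
    have h1 : (ν ^ (m - k)) ((ν ^ k) α) = α := by
      have : (ν ^ (m - k)) ((ν ^ k) α) = (ν ^ (m - k + k)) α := by
        rw [pow_add]; rfl
      rw [this, Nat.sub_add_cancel hk, hord]
    calc B α ((ν ^ k) α) = B ((ν ^ (m - k)) α) ((ν ^ (m - k)) ((ν ^ k) α)) :=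
          (hisoP (m - k) α ((ν ^ k) α)).symm
      _ = B ((ν ^ (m - k)) α) α := by rw [h1]
      _ = B α ((ν ^ (m - k)) α) := hsymm _ _
  refine (ZMod.intCast_eq_intCast_iff _ _ 2).mp ?_
  push_cast
  set F : ℕ → ZMod 2 := fun k => ((B α ((ν ^ k) α) : ℤ) : ZMod 2) with hF
  show ∑ k ∈ Finset.range m, F k = F (m / 2)
  rw [hn2]
  have h0mem : 0 ∈ Finset.range m := Finset.mem_range.mpr hmpos
  rw [← Finset.add_sum_erase _ F h0mem]
  have hnmem : n ∈ (Finset.range m).erase 0 :=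
    Finset.mem_erase.mpr ⟨by omega, Finset.mem_range.mpr hnm⟩
  rw [← Finset.add_sum_erase _ F hnmem]
  have hF0 : F 0 = 0 := by
    have : (2 : ℤ) ∣ B α ((ν ^ 0) α) := by
      simpa using (heven α).two_dvd
    simpa [hF] using (ZMod.intCast_zmod_eq_zero_iff_dvd _ 2).mpr this
  rw [hF0, zero_add]
  have hrest : ∑ k ∈ ((Finset.range m).erase 0).erase n, F k = 0 := by
    apply Finset.sum_involution (fun k _ => m - k)
    · intro k hk
      simp only [Finset.mem_erase, Finset.mem_range] at hk
      have hkm : k ≤ m := le_of_lt hk.2.2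
      have : F (m - k) = F k := by simp [hF, ← key k hkm]
      rw [this]
      exact CharTwo.add_self_eq_zero _
    · intro k hk _
      simp only [Finset.mem_erase, Finset.mem_range] at hk
      omega
    · intro k hk
      simp only [Finset.mem_erase, Finset.mem_range] at hk ⊢
      omega
    · intro k hk
      simp only [Finset.mem_erase, Finset.mem_range] at hk
      omega
  rw [hrest, add_zero]
end

section
/- Let L be a positive-definite integral unimodular lattice and ν an isometry of L with ν^m = id for some positive integer m. Let π_ν = (1/m) Σ_{k=0}^{m−1} ν^k acting on L ⊗_ℤ ℚ, and let L^ν = {x ∈ L : νx = x}. Then the image π_ν(L) equals the dual lattice of L^ν inside the ν-fixed subspace, i.e., π_ν(L) = {x ∈ L ⊗_ℤ ℚ : νx = x and ⟨x, y⟩ ∈ ℤ for all y ∈ L^ν}. -/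
/-!
The average `π = m⁻¹ ∑ νᵏ` is fixed by `ν` and satisfies `B (π z) y = B z y` for `ν`-fixed `y`,
so it maps `L` into the dual of `L^ν = L ∩ V^ν`. Conversely, let `x ∈ V^ν` pair integrally with
`L^ν`. Since `L / L^ν` embeds in the `ℚ`-space `V / V^ν`, it is torsion-free, so `L^ν` is a direct
summand of `L`; composing `B x` with a retraction `L → L^ν` gives an integral functional on `L`,
which by unimodularity is `B z` for some `z ∈ L`. Then `π z - x` is fixed and orthogonal to `L^ν`.
As `π L ⊆ ℚ L^ν`, the lattice `L^ν` spans `V^ν`, so `B (π z - x) (π z - x) = 0` and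
positive-definiteness gives `π z = x`.
-/

open Finset Submodule

namespace LinearEquiv

variable {K V : Type*} [Field K] [AddCommGroup V] [Module K V] (ν : V ≃ₗ[K] V) (m : ℕ)

def average : V →ₗ[K] V := (m : K)⁻¹ • ∑ k ∈ range m, ((ν ^ k : V ≃ₗ[K] V) : V →ₗ[K] V)

lemma average_apply (v : V) : ν.average m v = (m : K)⁻¹ • ∑ k ∈ range m, (ν ^ k) v := by
  simp [average, LinearMap.sum_apply]

def fixedSubspace : Submodule K V := LinearMap.eqLocus (ν : V →ₗ[K] V) LinearMap.id

@[simp]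
lemma mem_fixedSubspace {v : V} : v ∈ ν.fixedSubspace ↔ ν v = v := Iff.rfl

variable {ν m}

lemma pow_apply_of_apply_eq_self {v : V} (hv : ν v = v) (k : ℕ) : (ν ^ k) v = v := by
  rw [coe_pow]
  exact Function.IsFixedPt.iterate hv k

lemma apply_sum_range_pow_apply (hord : ν ^ m = 1) (v : V) :
    ν (∑ k ∈ range m, (ν ^ k) v) = ∑ k ∈ range m, (ν ^ k) v := by
  have hshift := sum_range_succ' (fun k => (ν ^ k) v) m
  rw [sum_range_succ, hord, pow_zero, add_left_inj] at hshift
  simp_rw [map_sum, ← mul_apply, ← pow_succ', hshift]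

lemma average_mem_fixedSubspace (hord : ν ^ m = 1) (v : V) : ν.average m v ∈ ν.fixedSubspace := by
  rw [mem_fixedSubspace, average_apply, map_smul, apply_sum_range_pow_apply hord]

lemma average_apply_of_apply_eq_self [CharZero K] (hm : m ≠ 0) {v : V} (hv : ν v = v) :
    ν.average m v = v := by
  rw [average_apply]
  simp only [pow_apply_of_apply_eq_self hv, sum_const, card_range]
  rw [← Nat.cast_smul_eq_nsmul K, inv_smul_smul₀ (Nat.cast_ne_zero.mpr hm)]

lemma bilin_pow_apply_pow_apply {B : LinearMap.BilinForm K V}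
    (hiso : ∀ x y, B (ν x) (ν y) = B x y) (k : ℕ) (x y : V) :
    B ((ν ^ k) x) ((ν ^ k) y) = B x y := by
  induction k generalizing x y with
  | zero => rfl
  | succ k ih => rw [pow_succ, mul_apply, mul_apply, ih, hiso]

lemma bilin_average_apply_of_apply_eq_self [CharZero K] {B : LinearMap.BilinForm K V}
    (hiso : ∀ x y, B (ν x) (ν y) = B x y) (hm : m ≠ 0) (z : V) {y : V} (hy : ν y = y) :
    B (ν.average m z) y = B z y := by
  have hterm (k : ℕ) : B ((ν ^ k) z) y = B z y := by
    conv_lhs => rw [← pow_apply_of_apply_eq_self hy k]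
    exact bilin_pow_apply_pow_apply hiso k z y
  simp [average_apply, hterm, hm]

end LinearEquiv

lemma LinearMap.BilinForm.surjective_of_anisotropic {K V : Type*} [Field K] [AddCommGroup V]
    [Module K V] [FiniteDimensional K V] {B : LinearMap.BilinForm K V}
    (hB : B.toQuadraticMap.Anisotropic) : Function.Surjective B :=
  (LinearMap.injective_iff_surjective_of_finrank_eq_finrank Subspace.dual_finrank_eq.symm).mp <|
    LinearMap.ker_eq_bot.mp <| LinearMap.separatingLeft_iff_ker_eq_bot.mp <|
      LinearMap.BilinForm.separatingLeft_of_anisotropic hB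

lemma LinearMap.BilinForm.eq_zero_of_mem_span_of_forall_eq_zero {K V : Type*} [Field K]
    [AddCommGroup V] [Module K V] {B : LinearMap.BilinForm K V}
    (hB : B.toQuadraticMap.Anisotropic) {s : Set V} {d : V} (hd : d ∈ span K s)
    (h : ∀ y ∈ s, B d y = 0) : d = 0 :=
  hB d (span_le (p := LinearMap.ker (B d)) |>.mpr h hd)

lemma Submodule.exists_isProj_of_isTorsionFree_quotient {R M : Type*} [CommRing R] [IsDomain R]
    [IsPrincipalIdealRing R] [AddCommGroup M] [Module R M] [Module.Finite R M] (N : Submodule R M)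
    [Module.IsTorsionFree R (M ⧸ N)] : ∃ r : M →ₗ[R] M, LinearMap.IsProj N r := by
  obtain ⟨s, hs⟩ := Module.projective_lifting_property N.mkQ LinearMap.id N.mkQ_surjective
  refine ⟨LinearMap.id - s ∘ₗ N.mkQ, fun y => ?_, fun y hy => ?_⟩
  · rw [← Quotient.mk_eq_zero, ← N.mkQ_apply]
    simpa [sub_eq_zero] using congr($hs (N.mkQ y)).symm
  · simp [(Quotient.mk_eq_zero N).mpr hy]

section RationalLattice

variable {V : Type*} [AddCommGroup V] [Module ℚ V]

lemma exists_zsmul_mem_of_mem_span {L : Submodule ℤ V} {v : V} (hv : v ∈ span ℚ (L : Set V)) :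
    ∃ n : ℤ, n ≠ 0 ∧ n • v ∈ L := by
  have := isLocalizedModule_id (nonZeroDivisors ℤ) V ℚ
  rw [← Set.image_id (L : Set V), ← LinearMap.id_coe (R := ℤ),
    ← localized'_eq_span ℚ (nonZeroDivisors ℤ)] at hv
  obtain ⟨y, hy, s, rfl⟩ := hv
  refine ⟨s, nonZeroDivisors.coe_ne_zero s, ?_⟩
  rwa [← Submonoid.smul_def, IsLocalizedModule.mk'_cancel']

lemma anisotropic_of_pos_of_span_eq_top {B : LinearMap.BilinForm ℚ V} {L : Submodule ℤ V}
    (hspan : span ℚ (L : Set V) = ⊤) (hpos : ∀ x ∈ L, x ≠ 0 → 0 < B x x) :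
    B.toQuadraticMap.Anisotropic := by
  intro v hv
  by_contra hne
  obtain ⟨n, hn, hnv⟩ := exists_zsmul_mem_of_mem_span (hspan ▸ mem_top : v ∈ _)
  rw [← Int.cast_smul_eq_zsmul ℚ] at hnv
  have := hpos _ hnv (smul_ne_zero (Int.cast_ne_zero.mpr hn) hne)
  simp_all

instance Submodule.isTorsionFree_quotient_comap_subtype (L : Submodule ℤ V) (W : Submodule ℚ V) :
    Module.IsTorsionFree ℤ (L ⧸ (W.restrictScalars ℤ).comap L.subtype) := by
  refine .of_smul_eq_zero fun n q hq => ?_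
  induction q using Quotient.induction_on with | H y => ?_
  rw [← Quotient.mk_smul, Quotient.mk_eq_zero] at hq
  rw [Quotient.mk_eq_zero]
  by_cases hn : n = 0
  · exact .inl hn
  · refine .inr ?_
    have hq' : (n : ℚ) • (y : V) ∈ W := by simpa [Int.cast_smul_eq_zsmul] using hq
    simpa using (W.smul_mem_iff (Int.cast_ne_zero.mpr hn)).mp hq'

lemma exists_dual_extend_of_isLattice (L : Submodule ℤ V) [L.IsLattice ℚ] (g : L →ₗ[ℤ] ℚ) :
    ∃ f : Module.Dual ℚ V, ∀ y : L, f y = g y := by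
  let b := Module.Free.chooseBasis ℤ L
  let f := (b.extendOfIsLattice ℚ).constr ℚ (g ∘ b)
  have hf : (f.restrictScalars ℤ).comp L.subtype = g := b.ext fun i => by
    change f (b i) = g (b i)
    rw [← b.extendOfIsLattice_apply ℚ]
    exact (b.extendOfIsLattice ℚ).constr_basis ℚ (g ∘ b) i
  exact ⟨f, fun y => congr($hf y)⟩

lemma exists_mem_bilin_eq_on_subspace {B : LinearMap.BilinForm ℚ V} (hB : Function.Surjective B)
    {L : Submodule ℤ V} [L.IsLattice ℚ] (hself : {z | ∀ y ∈ L, ∃ n : ℤ, B z y = n} ⊆ L)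
    (W : Submodule ℚ V) {x : V} (hx : ∀ y ∈ L, y ∈ W → ∃ n : ℤ, B x y = n) :
    ∃ z ∈ L, ∀ y ∈ L, y ∈ W → B z y = B x y := by
  obtain ⟨r, hr⟩ := ((W.restrictScalars ℤ).comap L.subtype).exists_isProj_of_isTorsionFree_quotient
  obtain ⟨f, hf⟩ := exists_dual_extend_of_isLattice L ((B x).restrictScalars ℤ ∘ₗ L.subtype ∘ₗ r)
  obtain ⟨z, rfl⟩ := hB f
  refine ⟨z, hself fun y hy => ?_, fun y hy hyW => ?_⟩
  · rw [hf ⟨y, hy⟩]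
    exact hx _ (r _).2 (hr.map_mem _)
  · rw [hf ⟨y, hy⟩]
    simp [hr.map_id ⟨y, hy⟩ hyW]

lemma fixedSubspace_le_span_inf {ν : V ≃ₗ[ℚ] V} {m : ℕ} (hm : m ≠ 0) (hord : ν ^ m = 1)
    {L : Submodule ℤ V} (hspan : span ℚ (L : Set V) = ⊤) (hνL : Set.MapsTo ν L L) :
    ν.fixedSubspace ≤ span ℚ ((L ⊓ ν.fixedSubspace.restrictScalars ℤ : Submodule ℤ V) : Set V) := by
  have haverage : (span ℚ (L : Set V)).map (ν.average m) ≤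
      span ℚ ((L ⊓ ν.fixedSubspace.restrictScalars ℤ : Submodule ℤ V) : Set V) := by
    refine map_span_le _ _ _ |>.mpr fun u hu => ?_
    have hsum : ∑ k ∈ range m, (ν ^ k) u ∈ L ⊓ ν.fixedSubspace.restrictScalars ℤ := by
      refine ⟨L.sum_mem fun k _ => ?_, ν.apply_sum_range_pow_apply hord u⟩
      rw [LinearEquiv.coe_pow]
      exact hνL.iterate k hu
    rw [LinearEquiv.average_apply]
    exact smul_mem _ _ (subset_span hsum)
  intro w hw
  rw [← LinearEquiv.average_apply_of_apply_eq_self hm hw]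
  exact haverage (mem_map_of_mem (hspan ▸ mem_top))

end RationalLattice

theorem projection_image_eq_dual_of_fixed_lattice_general
    (V : Type*) [AddCommGroup V] [Module ℚ V] [FiniteDimensional ℚ V]
    (B : V →ₗ[ℚ] V →ₗ[ℚ] ℚ)
    (L : Submodule ℤ V) (hfg : L.FG)
    (hspan : Submodule.span ℚ (L : Set V) = ⊤)
    (hint : ∀ x ∈ L, ∀ y ∈ L, ∃ n : ℤ, B x y = (n : ℚ))
    (hpos : ∀ x ∈ L, x ≠ 0 → 0 < B x x)
    (hself : (L : Set V) = {x | ∀ y ∈ L, ∃ n : ℤ, B x y = (n : ℚ)})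
    (ν : V ≃ₗ[ℚ] V) (hiso : ∀ x y, B (ν x) (ν y) = B x y)
    (hνL : ∀ x, x ∈ L ↔ ν x ∈ L)
    (m : ℕ) (hmpos : 0 < m) (hord : ∀ x, (ν ^ m) x = x) :
    (fun v => (m : ℚ)⁻¹ • ∑ k ∈ Finset.range m, (ν ^ k) v) '' (L : Set V)
      = {x | ν x = x ∧ ∀ y ∈ L, ν y = y → ∃ n : ℤ, B x y = (n : ℚ)} := by
  have hm : m ≠ 0 := hmpos.ne'
  have hord : ν ^ m = 1 := LinearEquiv.ext hord
  have : L.IsLattice ℚ := ⟨hfg, hspan⟩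
  have hB : (LinearMap.BilinMap.toQuadraticMap B).Anisotropic :=
    anisotropic_of_pos_of_span_eq_top hspan hpos
  rw [show (fun v => (m : ℚ)⁻¹ • ∑ k ∈ range m, (ν ^ k) v) = ν.average m from
    funext fun v => (ν.average_apply m v).symm]
  ext x
  constructor
  · rintro ⟨z, hz, rfl⟩
    exact ⟨ν.average_mem_fixedSubspace hord z, fun y hy hνy =>
      ν.bilin_average_apply_of_apply_eq_self hiso hm z hνy ▸ hint z hz y hy⟩
  · rintro ⟨hx, hxint⟩
    obtain ⟨z, hz, hzx⟩ := exists_mem_bilin_eq_on_subspace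
      (LinearMap.BilinForm.surjective_of_anisotropic hB) hself.symm.subset ν.fixedSubspace hxint
    have hfixed : ν.average m z - x ∈ ν.fixedSubspace :=
      sub_mem (ν.average_mem_fixedSubspace hord z) hx
    refine ⟨z, hz, sub_eq_zero.mp (LinearMap.BilinForm.eq_zero_of_mem_span_of_forall_eq_zero hB
      (fixedSubspace_le_span_inf hm hord hspan (fun y hy => (hνL y).mp hy) hfixed) ?_)⟩
    rintro y ⟨hyL, hyν⟩
    rw [map_sub, LinearMap.sub_apply, ν.bilin_average_apply_of_apply_eq_self hiso hm z hyν,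
      hzx y hyL hyν, sub_self]

/-- For a positive-definite integral unimodular lattice `L` (realised as a full ℤ-lattice in a
finite-dimensional rational vector space `V`, unimodularity being self-duality) and an isometry
`ν` of `L` with `ν^m = id`, the image `π_ν(L)` of the projection
`π_ν = (1/m) ∑_{k<m} ν^k` equals the dual lattice of the fixed-point lattice `L^ν`
inside the ν-fixed subspace. -/
theorem projection_image_eq_dual_of_fixed_lattice
    (V : Type*) [AddCommGroup V] [Module ℚ V] [FiniteDimensional ℚ V]
    (B : V →ₗ[ℚ] V →ₗ[ℚ] ℚ) (hsymm : ∀ x y, B x y = B y x)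
    (L : Submodule ℤ V) (hfg : L.FG)
    (hspan : Submodule.span ℚ (L : Set V) = ⊤)
    (hint : ∀ x ∈ L, ∀ y ∈ L, ∃ n : ℤ, B x y = (n : ℚ))
    (hpos : ∀ x ∈ L, x ≠ 0 → 0 < B x x)
    (hself : (L : Set V) = {x | ∀ y ∈ L, ∃ n : ℤ, B x y = (n : ℚ)})
    (ν : V ≃ₗ[ℚ] V) (hiso : ∀ x y, B (ν x) (ν y) = B x y)
    (hνL : ∀ x, x ∈ L ↔ ν x ∈ L)
    (m : ℕ) (hmpos : 0 < m) (hord : ∀ x, (ν ^ m) x = x) :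
    (fun v => (m : ℚ)⁻¹ • ∑ k ∈ Finset.range m, (ν ^ k) v) '' (L : Set V)
      = {x | ν x = x ∧ ∀ y ∈ L, ν y = y → ∃ n : ℤ, B x y = (n : ℚ)} :=
  projection_image_eq_dual_of_fixed_lattice_general V B L hfg hspan hint hpos hself ν hiso hνL m
    hmpos hord
end

section
/- A linear isometry f of ℝ^12 (with the standard inner product) satisfies f(D_12^+) = D_12^+ if and only if f is a signed permutation with an even number of sign changes, i.e., there exist a permutation σ of {1,…,12} and signs ε_1, …, ε_12 ∈ {±1} with ε_1 ⋯ ε_12 = 1 such that (f(x))_i = ε_i x_{σ(i)} for all x ∈ ℝ^12 and all i. Hence the orthogonal group of the lattice D_12^+ is isomorphic to S_12 ⋉ 2^11. -/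
open scoped RealInnerProductSpace

/-- The lattice `D₁₂⁺ ⊆ ℝ¹²`: all coordinates integers or all coordinates half-integers,
with coordinate sum in `2ℤ`. -/
def D12plus : Set (EuclideanSpace ℝ (Fin 12)) :=
  {x | ((∀ i, ∃ n : ℤ, x i = (n : ℝ)) ∨ (∀ i, ∃ n : ℤ, x i = (n : ℝ) + 1 / 2)) ∧
    ∃ m : ℤ, ∑ i, x i = 2 * (m : ℝ)}

/-!
A half-integral vector of `ℝ¹²` has squared norm at least `12 / 4 = 3`, so the norm-2 vectors
of `D₁₂⁺` are integral. If `f` preserves `D₁₂⁺`, it maps `eᵢ ± eⱼ` to such vectors, so every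
entry `M` of a row of its matrix satisfies `2M ∈ ℤ`, and the entries of a row are congruent
modulo `ℤ`. A row with all entries in `ℤ + 1/2` would have squared norm at least `3`, but rows
of an orthogonal matrix are unit vectors; hence the rows are integral unit vectors `±e_q`, and
`f` is a signed permutation. Writing the signs as `εᵢ = 1 - 2dᵢ`, the image of `(1/2, …, 1/2)`
has coordinate sum `6 - ∑ dᵢ`, which is even exactly when `∏ εᵢ = (-1)^∑ dᵢ = 1`. The same
bookkeeping shows that even signed permutations preserve `D₁₂⁺`.
-/

open Finset

section

variable {ι : Type*} [Fintype ι]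

lemma one_div_four_le_sq_int_add_half (n : ℤ) : 1 / 4 ≤ ((n : ℝ) + 1 / 2) ^ 2 := by
  have : (0 : ℝ) ≤ n * (n + 1) := by
    exact_mod_cast (show (0 : ℤ) ≤ n * (n + 1) by rcases le_or_gt 0 n with h | h <;> nlinarith)
  nlinarith

lemma card_div_four_le_sum_sq_of_halfInt {x : ι → ℝ} (hx : ∀ i, ∃ n : ℤ, x i = n + 1 / 2) :
    (Fintype.card ι : ℝ) / 4 ≤ ∑ i, x i ^ 2 := by
  calc (Fintype.card ι : ℝ) / 4 = ∑ _i : ι, (1 / 4 : ℝ) := by simp [div_eq_mul_inv]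
    _ ≤ ∑ i, x i ^ 2 := sum_le_sum fun i _ => by
      obtain ⟨n, hn⟩ := hx i
      exact hn ▸ one_div_four_le_sq_int_add_half n

lemma exists_int_eq_of_sum_sq_eq_one {a : ι → ℝ} (hι : 4 < Fintype.card ι)
    (ha : ∑ i, a i ^ 2 = 1)
    (hint : ∀ i j, i ≠ j → ∀ s : ℝ, (s = 1 ∨ s = -1) → ∃ n : ℤ, a i + s * a j = n) (i : ι) :
    ∃ n : ℤ, a i = n := by
  obtain ⟨j, hji⟩ := Fintype.exists_ne_of_one_lt_card (by omega) i
  obtain ⟨n₁, hn₁⟩ := hint i j hji.symm 1 (.inl rfl)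
  obtain ⟨n₂, hn₂⟩ := hint i j hji.symm (-1) (.inr rfl)
  obtain ⟨k, hk | hk⟩ := Int.even_or_odd' (n₁ + n₂)
  · refine ⟨k, ?_⟩
    have : ((n₁ + n₂ : ℤ) : ℝ) = 2 * k := by exact_mod_cast hk
    push_cast at this
    linarith
  have hhalf : ∀ l, ∃ n : ℤ, a l = n + 1 / 2 := by
    have hi : a i = k + 1 / 2 := by
      have : ((n₁ + n₂ : ℤ) : ℝ) = 2 * k + 1 := by exact_mod_cast hk
      push_cast at this
      linarith
    intro l
    rcases eq_or_ne l i with rfl | hli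
    · exact ⟨k, hi⟩
    obtain ⟨m, hm⟩ := hint i l hli.symm (-1) (.inr rfl)
    exact ⟨k - m, by push_cast; linarith⟩
  have := card_div_four_le_sum_sq_of_halfInt hhalf
  rw [ha, div_le_one (by norm_num)] at this
  exact absurd this (by exact_mod_cast hι.not_ge)

lemma exists_exponent_of_eq_one_or_eq_neg_one {ε : ℝ} (h : ε = 1 ∨ ε = -1) :
    ∃ d : ℕ, ε = (-1) ^ d ∧ ε = 1 - 2 * d := by
  rcases h with rfl | rfl
  exacts [⟨0, by norm_num⟩, ⟨1, by norm_num⟩]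

lemma prod_eq_one_iff_even_sum {ε : ι → ℝ} {d : ι → ℕ} (hd : ∀ i, ε i = (-1) ^ d i) :
    ∏ i, ε i = 1 ↔ Even (∑ i, d i) := by
  simp_rw [hd, prod_pow_eq_pow_sum, neg_one_pow_eq_one_iff_even (by norm_num : (-1 : ℝ) ≠ 1)]

lemma LinearIsometryEquiv.symm_apply_of_signedPerm
    (f : EuclideanSpace ℝ ι ≃ₗᵢ[ℝ] EuclideanSpace ℝ ι) {σ : Equiv.Perm ι} {ε : ι → ℝ}
    (hε : ∀ i, ε i = 1 ∨ ε i = -1)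
    (hf : ∀ (x : EuclideanSpace ℝ ι) (i : ι), f x i = ε i * x (σ i))
    (y : EuclideanSpace ℝ ι) (j : ι) : f.symm y j = ε (σ.symm j) * y (σ.symm j) := by
  have : y = f (WithLp.toLp 2 fun j => ε (σ.symm j) * y (σ.symm j)) := by
    ext i
    rw [hf]
    rcases hε i with h | h <;> simp [h]
  conv_lhs => rw [this, f.symm_apply_apply]

variable [DecidableEq ι]

lemma LinearIsometryEquiv.apply_eq_inner_symm_single
    (f : EuclideanSpace ℝ ι ≃ₗᵢ[ℝ] EuclideanSpace ℝ ι) (x : EuclideanSpace ℝ ι) (p : ι) :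
    f x p = ⟪x, f.symm (EuclideanSpace.single p 1)⟫ := by
  rw [← f.inner_map_eq_flip, EuclideanSpace.inner_single_right]
  simp

lemma norm_single_add_smul_single_sq {i j : ι} (hij : i ≠ j) (s : ℝ) :
    ‖EuclideanSpace.single i (1 : ℝ) + s • EuclideanSpace.single j 1‖ ^ 2 = 1 + s ^ 2 := by
  rw [norm_add_sq_real, real_inner_smul_right, EuclideanSpace.inner_single_left, norm_smul]
  simp [hij.symm]

lemma exists_eq_single_of_int_of_norm_eq_one {v : EuclideanSpace ℝ ι}
    (hint : ∀ i, ∃ n : ℤ, v i = n) (hv : ‖v‖ = 1) :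
    ∃ q, ∃ s : ℝ, (s = 1 ∨ s = -1) ∧ v = EuclideanSpace.single q s := by
  choose n hn using hint
  have hsum : ∑ i, n i ^ 2 = 1 := by
    have := EuclideanSpace.real_norm_sq_eq v
    simp only [hv, hn] at this
    exact_mod_cast this.symm
  obtain ⟨q, hq⟩ : ∃ q, n q ≠ 0 := by
    by_contra! h
    simp [h] at hsum
  have hq1 : 1 ≤ n q ^ 2 := by nlinarith [sq_pos_of_ne_zero hq]
  have hrest : ∑ i ∈ univ.erase q, n i ^ 2 = 1 - n q ^ 2 := by
    rw [← hsum, ← add_sum_erase _ _ (mem_univ q)]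
    ring
  have hrest_nonneg : 0 ≤ ∑ i ∈ univ.erase q, n i ^ 2 := sum_nonneg fun i _ => sq_nonneg (n i)
  have hzero := (sum_eq_zero_iff_of_nonneg fun i (_ : i ∈ univ.erase q) => sq_nonneg (n i)).mp
    (by linarith)
  refine ⟨q, n q, by exact_mod_cast sq_eq_one_iff.mp (by linarith), ?_⟩
  ext i
  rcases eq_or_ne i q with rfl | hiq
  · simp [hn]
  · simpa [hn, hiq] using hzero i (mem_erase.mpr ⟨hiq, mem_univ i⟩)

lemma exists_signedPerm_of_symm_single_eq (f : EuclideanSpace ℝ ι ≃ₗᵢ[ℝ] EuclideanSpace ℝ ι)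
    (h : ∀ p, ∃ q, ∃ s : ℝ, (s = 1 ∨ s = -1) ∧
      f.symm (EuclideanSpace.single p 1) = EuclideanSpace.single q s) :
    ∃ σ : Equiv.Perm ι, ∃ ε : ι → ℝ,
      (∀ i, ε i = 1 ∨ ε i = -1) ∧ ∀ (x : EuclideanSpace ℝ ι) (i : ι), f x i = ε i * x (σ i) := by
  choose τ ε hε hτ using h
  -- Distinct rows of `f` are orthogonal, so they cannot be supported on the same coordinate.
  have hτinj : Function.Injective τ := by
    intro p q hpq
    by_contra hne
    have := f.symm.inner_map_map (EuclideanSpace.single p 1) (EuclideanSpace.single q 1)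
    rw [hτ, hτ, hpq] at this
    simp [EuclideanSpace.inner_single_left, Ne.symm hne] at this
    rcases hε p with h | h <;> rcases hε q with h' | h' <;> simp [h, h'] at this
  refine ⟨Equiv.ofBijective τ (Finite.injective_iff_bijective.mp hτinj), ε, hε, fun x i => ?_⟩
  rw [f.apply_eq_inner_symm_single, hτ, EuclideanSpace.inner_single_right]
  simp

end

lemma exists_int_of_mem_D12plus_of_norm_sq_lt {x : EuclideanSpace ℝ (Fin 12)}
    (hx : x ∈ D12plus) (hnorm : ‖x‖ ^ 2 < 3) : ∀ i, ∃ n : ℤ, x i = n := by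
  refine hx.1.resolve_right fun hhalf => hnorm.not_ge ?_
  have := card_div_four_le_sum_sq_of_halfInt hhalf
  norm_num at this
  rwa [EuclideanSpace.real_norm_sq_eq]

lemma single_add_smul_single_mem_D12plus (i j : Fin 12) {s : ℝ} (hs : s = 1 ∨ s = -1) :
    EuclideanSpace.single i (1 : ℝ) + s • EuclideanSpace.single j 1 ∈ D12plus := by
  refine ⟨.inl fun q => ?_, ?_⟩
  · rcases hs with rfl | rfl
    · exact ⟨(if q = i then 1 else 0) + (if q = j then 1 else 0), by simp⟩
    · exact ⟨(if q = i then 1 else 0) - (if q = j then 1 else 0), by simp [sub_eq_add_neg]⟩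
  · rcases hs with rfl | rfl
    exacts [⟨1, by simp [sum_add_distrib]; norm_num⟩, ⟨0, by simp [sum_add_distrib]⟩]

lemma halves_mem_D12plus : WithLp.toLp 2 (fun _ : Fin 12 => (1 / 2 : ℝ)) ∈ D12plus :=
  ⟨.inr fun _ => ⟨0, by simp⟩, ⟨3, by simp; norm_num⟩⟩

lemma mem_D12plus_iff {x : EuclideanSpace ℝ (Fin 12)} :
    x ∈ D12plus ↔
      ∃ b : ℕ, b ≤ 1 ∧ (∀ i, ∃ n : ℤ, x i = n + b / 2) ∧ ∃ m : ℤ, ∑ i, x i = 2 * m := by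
  constructor
  · rintro ⟨hint | hhalf, hsum⟩
    · exact ⟨0, zero_le_one, by simpa using hint, hsum⟩
    · exact ⟨1, le_rfl, by simpa using hhalf, hsum⟩
  · rintro ⟨b, hb, hcoord, hsum⟩
    refine ⟨?_, hsum⟩
    rcases Nat.le_one_iff_eq_zero_or_eq_one.mp hb with rfl | rfl
    exacts [.inl (by simpa using hcoord), .inr (by simpa using hcoord)]

lemma signedPerm_mem_D12plus {σ : Equiv.Perm (Fin 12)} {ε : Fin 12 → ℝ}
    (hε : ∀ i, ε i = 1 ∨ ε i = -1) (hprod : ∏ i, ε i = 1) {x y : EuclideanSpace ℝ (Fin 12)}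
    (hx : x ∈ D12plus) (hy : ∀ i, y i = ε i * x (σ i)) : y ∈ D12plus := by
  choose d hd using fun i => exists_exponent_of_eq_one_or_eq_neg_one (hε i)
  obtain ⟨k, hk⟩ := (prod_eq_one_iff_even_sum fun i => (hd i).1).mp hprod
  obtain ⟨b, hb, hcoord, m, hm⟩ := mem_D12plus_iff.mp hx
  choose n hn using hcoord
  refine mem_D12plus_iff.mpr ⟨b, hb, fun i => ⟨n (σ i) - 2 * d i * n (σ i) - b * d i, ?_⟩,
    m - ∑ i, d i * n (σ i) - b * k, ?_⟩
  · rw [hy, hn, (hd i).2]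
    push_cast
    ring
  · have hdk : ∑ i, (d i : ℝ) = k + k := by exact_mod_cast hk
    calc ∑ i, y i = ∑ i, x (σ i) - 2 * ∑ i, (d i * n (σ i) : ℝ) - b * ∑ i, (d i : ℝ) := by
          rw [mul_sum, mul_sum, ← sum_sub_distrib, ← sum_sub_distrib]
          refine sum_congr rfl fun i _ => ?_
          rw [hy, hn, (hd i).2]
          ring
      _ = _ := by
          rw [Equiv.sum_comp σ x, hm, hdk]
          push_cast
          ring

lemma exists_evenSignedPerm_of_mapsTo
    (f : EuclideanSpace ℝ (Fin 12) ≃ₗᵢ[ℝ] EuclideanSpace ℝ (Fin 12))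
    (hf : Set.MapsTo f D12plus D12plus) :
    ∃ σ : Equiv.Perm (Fin 12), ∃ ε : Fin 12 → ℝ,
      (∀ i, ε i = 1 ∨ ε i = -1) ∧ (∏ i, ε i = 1) ∧
      ∀ (x : EuclideanSpace ℝ (Fin 12)) (i : Fin 12), f x i = ε i * x (σ i) := by
  have hrow : ∀ p i, ∃ n : ℤ, f.symm (EuclideanSpace.single p 1) i = n := by
    intro p
    refine exists_int_eq_of_sum_sq_eq_one (by simp) ?_ fun i j hij s hs => ?_
    · rw [← EuclideanSpace.real_norm_sq_eq]
      simp
    · have hnorm : ‖f (EuclideanSpace.single i 1 + s • EuclideanSpace.single j 1)‖ ^ 2 < 3 := by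
        rw [f.norm_map, norm_single_add_smul_single_sq hij]
        rcases hs with rfl | rfl <;> norm_num
      obtain ⟨n, hn⟩ := exists_int_of_mem_D12plus_of_norm_sq_lt
        (hf (single_add_smul_single_mem_D12plus i j hs)) hnorm p
      refine ⟨n, ?_⟩
      simpa [f.apply_eq_inner_symm_single, EuclideanSpace.inner_single_left] using hn
  obtain ⟨σ, ε, hε, hform⟩ := exists_signedPerm_of_symm_single_eq f fun p =>
    exists_eq_single_of_int_of_norm_eq_one (hrow p) (by simp)
  refine ⟨σ, ε, hε, ?_, hform⟩
  choose d hd using fun i => exists_exponent_of_eq_one_or_eq_neg_one (hε i)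
  rw [prod_eq_one_iff_even_sum fun i => (hd i).1]
  obtain ⟨-, m, hm⟩ := hf halves_mem_D12plus
  have hsum : ((∑ i, d i : ℕ) : ℤ) = (3 - m) + (3 - m) := by
    have : ((∑ i, d i : ℕ) : ℝ) = (3 - m) + (3 - m) := by
      simp only [hform, (hd _).2] at hm
      rw [← sum_mul, sum_sub_distrib, ← mul_sum] at hm
      simp only [sum_const, card_univ, Fintype.card_fin, nsmul_eq_mul, Nat.cast_ofNat, mul_one,
        one_div] at hm
      push_cast
      linarith
    exact_mod_cast this
  exact (Int.even_coe_nat _).mp ⟨3 - m, hsum⟩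

/-- A linear isometry of ℝ¹² preserves `D₁₂⁺` if and only if it is a signed permutation
of the coordinates with an even number of sign changes; hence
`O(D₁₂⁺) ≅ S₁₂ ⋉ 2¹¹`. -/
theorem D12plus_orthogonal_group
    (f : EuclideanSpace ℝ (Fin 12) ≃ₗᵢ[ℝ] EuclideanSpace ℝ (Fin 12)) :
    f '' D12plus = D12plus ↔
    ∃ σ : Equiv.Perm (Fin 12), ∃ ε : Fin 12 → ℝ,
      (∀ i, ε i = 1 ∨ ε i = -1) ∧ (∏ i, ε i = 1) ∧
      ∀ (x : EuclideanSpace ℝ (Fin 12)) (i : Fin 12), f x i = ε i * x (σ i) := by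
  constructor
  · intro h
    exact exists_evenSignedPerm_of_mapsTo f ((Set.mapsTo_image f D12plus).mono_right h.subset)
  · rintro ⟨σ, ε, hε, hprod, hf⟩
    refine Set.Subset.antisymm ?_ fun y hy => ⟨f.symm y, ?_, f.apply_symm_apply y⟩
    · rintro _ ⟨x, hx, rfl⟩
      exact signedPerm_mem_D12plus hε hprod hx (hf x)
    · exact signedPerm_mem_D12plus (fun _ => hε _) (by rwa [Equiv.prod_comp σ.symm ε]) hy
        (f.symm_apply_of_signedPerm hε hf y)
end

section
/- Let L be a positive-definite even unimodular integral lattice and ν an isometry of L with ν^m = id for some positive integer m. Suppose that the fixed-point lattice L^ν = {x ∈ L : νx = x}, equipped with the restriction of the form of L, is isometric to √2·D_12^+ (that is, to D_12^+ with its standard form multiplied by 2). Then π_ν(L) = (1/2)·L^ν as subsets of L ⊗_ℤ ℚ, where π_ν = (1/m) Σ_{k=0}^{m−1} ν^k. -/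
/-!
For a `ν`-fixed `y`, `B (π_ν x) y = B x y`, so for `x ∈ L` the vector `π_ν x` pairs integrally with
`L^ν ≅ √2·D₁₂⁺` while `m • π_ν x ∈ L^ν`. As `D₁₂⁺` is unimodular, the dual of `L^ν` is `½ L^ν`,
whence `π_ν(L) ⊆ ½ L^ν`.

Conversely `T = 2 π_ν(L)` satisfies `2 L^ν ⊆ T ⊆ L^ν`. If `y ∈ L^ν` and `½ B(y, T) ⊆ 2ℤ`, then
`B(y, L) ⊆ 2ℤ`, so `y / 2 ∈ L^* = L` and `y ∈ 2 L^ν`. Thus no nonzero vector of `L^ν / 2 L^ν` is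
orthogonal to `T / 2 L^ν` for the reduction mod 2 of the integral form `½ B`, and a dimension count
over `𝔽₂` gives `T = L^ν`.
-/

open scoped RealInnerProductSpace Pointwise

lemma exists_int_add_half_of_mem_D12plus {x : EuclideanSpace ℝ (Fin 12)} (hx : x ∈ D12plus) :
    ∃ (a : Fin 12 → ℤ) (t s : ℤ), (∀ i, x i = a i + t / 2) ∧ ∑ i, (a i : ℝ) + 6 * t = 2 * s := by
  obtain ⟨hx | hx, s, hs⟩ := hx <;> choose a ha using hx <;>
    simp only [ha, Finset.sum_add_distrib] at hs
  · exact ⟨a, 0, s, fun i => by simp [ha], by simpa using hs⟩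
  · refine ⟨a, 1, s, fun i => by simp [ha], ?_⟩
    norm_num at hs ⊢
    linarith

lemma inner_eq_sum_mul (x y : EuclideanSpace ℝ (Fin 12)) : ⟪x, y⟫ = ∑ i, x i * y i := by
  simp [PiLp.inner_apply, mul_comm]

lemma exists_int_inner_eq_of_mem_D12plus {x y : EuclideanSpace ℝ (Fin 12)} (hx : x ∈ D12plus)
    (hy : y ∈ D12plus) : ∃ n : ℤ, ⟪x, y⟫ = n := by
  obtain ⟨a, t, s, ha, has⟩ := exists_int_add_half_of_mem_D12plus hx
  obtain ⟨b, u, r, hb, hbr⟩ := exists_int_add_half_of_mem_D12plus hy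
  refine ⟨∑ i, a i * b i + u * s + t * r - 3 * t * u, ?_⟩
  simp only [inner_eq_sum_mul, ha, hb, add_mul, mul_add, Finset.sum_add_distrib,
    ← Finset.sum_mul, ← Finset.mul_sum, Finset.sum_const, Finset.card_univ, Fintype.card_fin,
    nsmul_eq_mul]
  push_cast
  linear_combination (u / 2 : ℝ) * has + (t / 2 : ℝ) * hbr

lemma single_add_single_mem_D12plus (i j : Fin 12) {a b : ℤ} (hab : Even (a + b)) :
    EuclideanSpace.single i (a : ℝ) + EuclideanSpace.single j (b : ℝ) ∈ D12plus := by
  obtain ⟨s, hs⟩ := hab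
  refine ⟨Or.inl fun k => ?_, s, ?_⟩
  · exact ⟨(if k = i then a else 0) + (if k = j then b else 0), by simp⟩
  · simp only [PiLp.add_apply, PiLp.single_apply, Finset.sum_add_distrib, Finset.sum_ite_eq',
      Finset.mem_univ, ↓reduceIte]
    exact_mod_cast hs.trans (two_mul s).symm

noncomputable def halfVector : EuclideanSpace ℝ (Fin 12) := WithLp.toLp 2 fun _ => 1 / 2

lemma halfVector_mem_D12plus : halfVector ∈ D12plus :=
  ⟨Or.inr fun _ => ⟨0, by simp [halfVector]⟩, 3, by norm_num [halfVector]⟩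

lemma mem_D12plus_of_forall_inner_int {w : EuclideanSpace ℝ (Fin 12)}
    (hw : ∀ d ∈ D12plus, ∃ n : ℤ, ⟪w, d⟫ = n) : w ∈ D12plus := by
  have pair (k : Fin 12) (c : ℤ) (hc : Even (1 + c)) : ∃ n : ℤ, w k + c * w 0 = n := by
    obtain ⟨n, hn⟩ := hw _ (single_add_single_mem_D12plus k 0 hc)
    exact ⟨n, by simpa [inner_add_right, EuclideanSpace.inner_single_right, mul_comm] using hn⟩
  choose p hp using fun k => pair k 1 (by decide)
  choose q hq using fun k => pair k (-1) (by decide)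
  push_cast at hp hq
  obtain ⟨s, hs⟩ := hw _ halfVector_mem_D12plus
  have hsum : ∑ k, w k = 2 * s := by
    simp only [halfVector, inner_eq_sum_mul, ← Finset.sum_mul] at hs
    linarith
  have h0 : 2 * w 0 = p 0 := by linarith [hp 0]
  have hk (k : Fin 12) : w k = q k + w 0 := by linarith [hq k]
  refine ⟨?_, s, hsum⟩
  obtain ⟨r, hr | hr⟩ := Int.even_or_odd' (p 0) <;> rw [hr] at h0 <;> push_cast at h0
  · exact Or.inl fun k => ⟨q k + r, by rw [hk k]; push_cast; linarith⟩
  · exact Or.inr fun k => ⟨q k + r, by rw [hk k]; push_cast; linarith⟩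

theorem Submodule.eq_top_of_forall_apply_eq_zero {K F : Type*} [Field K] [AddCommGroup F]
    [Module K F] [FiniteDimensional K F] (b : F →ₗ[K] F →ₗ[K] K) (S : Submodule K F)
    (hS : ∀ y, (∀ t ∈ S, b y t = 0) → y = 0) : S = ⊤ := by
  have hinj : Function.Injective (b.compl₂ S.subtype) := by
    rw [← LinearMap.ker_eq_bot, Submodule.eq_bot_iff]
    exact fun y hy => hS y fun t ht => congr($hy ⟨t, ht⟩)
  apply Submodule.eq_top_of_finrank_eq
  refine le_antisymm (Submodule.finrank_le S) ?_
  simpa only [Subspace.dual_finrank_eq] using LinearMap.finrank_le_finrank_of_injective hinj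

section ModN

variable {G : Type*} [AddCommGroup G] (n : ℕ)

noncomputable def LinearMap.modN (β : G →ₗ[ℤ] G →ₗ[ℤ] ℤ) :
    ModN G n →ₗ[ZMod n] ModN G n →ₗ[ZMod n] ZMod n :=
  let βn := β.compr₂ (Int.castAddHom (ZMod n)).toIntLinearMap
  have hker : LinearMap.range (LinearMap.lsmul ℤ G n) ≤ LinearMap.ker βn := by
    rintro _ ⟨g, rfl⟩
    ext t
    simp [βn]
  have hker' : LinearMap.range (LinearMap.lsmul ℤ G n) ≤ LinearMap.ker βn.flip := by
    rintro _ ⟨g, rfl⟩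
    ext t
    simp [βn]
  let b := βn.liftQ₂ _ _ hker hker'
  LinearMap.mk₂ (ZMod n) (fun x y => b x y) (fun _ _ _ => by simp)
    (fun c x y => ZMod.map_smul (b.flip y) c x) (fun _ _ _ => by simp)
    (fun c x y => ZMod.map_smul (b x) c y)

theorem Submodule.eq_top_of_forall_dvd_imp_mem (p : ℕ) [Fact p.Prime] [Module.Free ℤ G]
    [Module.Finite ℤ G] (β : G →ₗ[ℤ] G →ₗ[ℤ] ℤ) (T : Submodule ℤ G)
    (hT : LinearMap.range (LinearMap.lsmul ℤ G p) ≤ T)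
    (hβ : ∀ y, (∀ t ∈ T, (p : ℤ) ∣ β y t) → y ∈ LinearMap.range (LinearMap.lsmul ℤ G p)) :
    T = ⊤ := by
  set N := LinearMap.range (LinearMap.lsmul ℤ G p)
  let S : Submodule (ZMod p) (ModN G p) :=
    AddSubgroup.toZModSubmodule p (T.map N.mkQ).toAddSubgroup
  have hS : S = ⊤ := by
    refine Submodule.eq_top_of_forall_apply_eq_zero (β.modN p) S fun y hy => ?_
    obtain ⟨y, rfl⟩ := N.mkQ_surjective y
    refine (Submodule.Quotient.mk_eq_zero N).mpr (hβ y fun t ht => ?_)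
    exact (ZMod.intCast_zmod_eq_zero_iff_dvd _ p).mp (hy _ ⟨t, ht, rfl⟩)
  refine eq_top_iff.mpr fun g _ => ?_
  obtain ⟨t, ht, hgt⟩ : N.mkQ g ∈ S := hS ▸ trivial
  simpa using T.sub_mem ht (hT ((Submodule.Quotient.eq N).mp hgt))

end ModN

section OrbitAverage

variable {K V : Type*} [Field K] [AddCommGroup V] [Module K V] (ν : V ≃ₗ[K] V) (m : ℕ)

noncomputable def LinearEquiv.orbitAverage : V →ₗ[K] V :=
  (m : K)⁻¹ • ∑ k ∈ Finset.range m, ((ν ^ k : V ≃ₗ[K] V) : V →ₗ[K] V)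

namespace LinearEquiv

lemma orbitAverage_apply (v : V) :
    ν.orbitAverage m v = (m : K)⁻¹ • ∑ k ∈ Finset.range m, (ν ^ k) v := by
  simp [orbitAverage, LinearMap.sum_apply]

variable {ν m}

lemma apply_orbitAverage (hν : ν ^ m = 1) (v : V) :
    ν (ν.orbitAverage m v) = ν.orbitAverage m v := by
  have hshift := (Finset.sum_range_succ' (fun k => (ν ^ k) v) m).symm.trans
    (Finset.sum_range_succ (fun k => (ν ^ k) v) m)
  rw [hν, pow_zero] at hshift
  simp only [orbitAverage_apply, map_smul, map_sum, ← LinearEquiv.mul_apply, ← pow_succ']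
  rw [add_right_cancel hshift]

lemma orbitAverage_eq_self (hm : (m : K) ≠ 0) {v : V} (hv : ν v = v) :
    ν.orbitAverage m v = v := by
  have hpow (k : ℕ) : (ν ^ k) v = v := by
    induction k with
    | zero => rfl
    | succ k ih => rw [pow_succ, LinearEquiv.mul_apply, hv, ih]
  simp [orbitAverage_apply, hpow, ← Nat.cast_smul_eq_nsmul K, smul_smul, hm]

lemma natCast_smul_orbitAverage (hm : (m : K) ≠ 0) (v : V) :
    (m : K) • ν.orbitAverage m v = ∑ k ∈ Finset.range m, (ν ^ k) v := by
  simp [orbitAverage_apply, smul_smul, hm]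

lemma orbitAverage_apply_left (B : V →ₗ[K] V →ₗ[K] K) (hB : ∀ x y, B (ν x) (ν y) = B x y)
    (hm : (m : K) ≠ 0) (x : V) {y : V} (hy : ν y = y) : B (ν.orbitAverage m x) y = B x y := by
  have hpow (k : ℕ) : B ((ν ^ k) x) y = B x y := by
    induction k with
    | zero => rfl
    | succ k ih => rw [pow_succ', LinearEquiv.mul_apply, ← hy, hB, hy, ih]
  simp [orbitAverage_apply, hpow, ← Nat.cast_smul_eq_nsmul K, hm]

end LinearEquiv

end OrbitAverage

section RationalLattice

variable {V : Type*} [AddCommGroup V] [Module ℚ V]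

structure IsIsometryToSqrtTwoD12plus (B : V →ₗ[ℚ] V →ₗ[ℚ] ℚ) (M : Submodule ℤ V)
    (f : M →+ EuclideanSpace ℝ (Fin 12)) : Prop where
  injective : Function.Injective f
  range_eq : Set.range f = D12plus
  form_eq : ∀ x y : M, ((B x y : ℚ) : ℝ) = 2 * ⟪f x, f y⟫

namespace IsIsometryToSqrtTwoD12plus

variable {B : V →ₗ[ℚ] V →ₗ[ℚ] ℚ} {M : Submodule ℤ V} {f : M →+ EuclideanSpace ℝ (Fin 12)}

lemma exists_eq_two_mul (hf : IsIsometryToSqrtTwoD12plus B M f) (y y' : M) :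
    ∃ n : ℤ, B y y' = 2 * n := by
  obtain ⟨n, hn⟩ := exists_int_inner_eq_of_mem_D12plus (hf.range_eq ▸ ⟨y, rfl⟩ : f y ∈ D12plus)
    (hf.range_eq ▸ ⟨y', rfl⟩ : f y' ∈ D12plus)
  have : ((B y y' : ℚ) : ℝ) = ((2 * n : ℤ) : ℚ) := by rw [hf.form_eq, hn]; push_cast; ring
  exact ⟨n, by exact_mod_cast this⟩

noncomputable def halfForm (hf : IsIsometryToSqrtTwoD12plus B M f) : M →ₗ[ℤ] M →ₗ[ℤ] ℤ :=
  LinearMap.restrictScalarsRange₂ M.subtype M.subtype (Algebra.linearMap ℤ ℚ)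
    (fun a b hab => by simpa using hab) ((2 : ℚ)⁻¹ • B)
    fun y y' => by obtain ⟨n, hn⟩ := hf.exists_eq_two_mul y y'; exact ⟨n, by simp [hn]⟩

lemma halfForm_apply (hf : IsIsometryToSqrtTwoD12plus B M f) (y y' : M) :
    (hf.halfForm y y' : ℚ) = B y y' / 2 := by
  simpa [halfForm, div_eq_inv_mul] using LinearMap.restrictScalarsRange₂_apply M.subtype
    M.subtype (Algebra.linearMap ℤ ℚ) _ ((2 : ℚ)⁻¹ • B) _ y y'

-- `(2 / N) • f (N • z)` pairs integrally with `D₁₂⁺ = f M`, so by self-duality it is some `f y₀`,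
-- and injectivity of `f` gives `y₀ = 2 • z`.
lemma two_smul_mem (hf : IsIsometryToSqrtTwoD12plus B M f) {z : V} {N : ℕ} (hN : N ≠ 0)
    (hNz : (N : ℚ) • z ∈ M) (hz : ∀ y ∈ M, ∃ n : ℤ, B z y = n) : (2 : ℚ) • z ∈ M := by
  set Y : M := ⟨(N : ℚ) • z, hNz⟩
  obtain ⟨y₀, hy₀⟩ : (2 / N : ℝ) • f Y ∈ Set.range f := by
    rw [hf.range_eq]
    refine mem_D12plus_of_forall_inner_int fun d hd => ?_
    obtain ⟨y, rfl⟩ : d ∈ Set.range f := hf.range_eq ▸ hd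
    obtain ⟨n, hn⟩ := hz y y.2
    refine ⟨n, ?_⟩
    have hY := hf.form_eq Y y
    simp only [Y, map_smul, LinearMap.smul_apply, hn, smul_eq_mul] at hY
    push_cast at hY
    rw [real_inner_smul_left]
    field_simp
    linarith
  have hNY : N • y₀ = 2 • Y := hf.injective (by
    rw [map_nsmul, map_nsmul, hy₀, ← Nat.cast_smul_eq_nsmul ℝ, ← Nat.cast_smul_eq_nsmul ℝ,
      smul_smul]
    field_simp
    norm_num)
  have hN' : (N : ℚ) ≠ 0 := by exact_mod_cast hN
  have : (2 : ℚ) • z = y₀ := smul_right_injective V hN' <| by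
    have := congrArg Subtype.val hNY
    simp only [Submodule.coe_smul_of_tower, ← Nat.cast_smul_eq_nsmul ℚ, Y] at this
    simp only [this, smul_comm (N : ℚ)]
    norm_num
  exact this ▸ y₀.2

end IsIsometryToSqrtTwoD12plus

section FixedLattice

variable {B : V →ₗ[ℚ] V →ₗ[ℚ] ℚ} {L Lν : Submodule ℤ V} {ν : V ≃ₗ[ℚ] V} {m : ℕ}

lemma pow_apply_mem (hνL : ∀ x ∈ L, ν x ∈ L) (k : ℕ) {x : V} (hx : x ∈ L) : (ν ^ k) x ∈ L := by
  induction k with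
  | zero => exact hx
  | succ k ih => rw [pow_succ', LinearEquiv.mul_apply]; exact hνL _ ih

lemma two_smul_orbitAverage_mem (hint : ∀ x ∈ L, ∀ y ∈ L, ∃ n : ℤ, B x y = (n : ℚ))
    (hiso : ∀ x y, B (ν x) (ν y) = B x y) (hνL : ∀ x ∈ L, ν x ∈ L) (hm : m ≠ 0)
    (hord : ν ^ m = 1) (hLν : ∀ z, z ∈ Lν ↔ z ∈ L ∧ ν z = z)
    {f : Lν →+ EuclideanSpace ℝ (Fin 12)} (hf : IsIsometryToSqrtTwoD12plus B Lν f)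
    {x : V} (hx : x ∈ L) : (2 : ℚ) • ν.orbitAverage m x ∈ Lν := by
  have hm' : (m : ℚ) ≠ 0 := by exact_mod_cast hm
  refine hf.two_smul_mem hm ((hLν _).mpr ⟨?_, ?_⟩) fun y hy => ?_
  · rw [LinearEquiv.natCast_smul_orbitAverage hm']
    exact Submodule.sum_mem L fun k _ => pow_apply_mem hνL k hx
  · rw [map_smul, LinearEquiv.apply_orbitAverage hord]
  · rw [LinearEquiv.orbitAverage_apply_left B hiso hm' x ((hLν y).mp hy).2]
    exact hint x hx y ((hLν y).mp hy).1

lemma inv_two_smul_mem_of_forall_exists_eq_two_mul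
    (hself : (L : Set V) = {x | ∀ y ∈ L, ∃ n : ℤ, B x y = (n : ℚ)})
    (hLν : ∀ z, z ∈ Lν ↔ z ∈ L ∧ ν z = z) {y : V} (hy : y ∈ Lν)
    (heven : ∀ x ∈ L, ∃ n : ℤ, B y x = 2 * n) : (2 : ℚ)⁻¹ • y ∈ Lν := by
  refine (hLν _).mpr ⟨?_, by rw [map_smul, ((hLν y).mp hy).2]⟩
  change _ ∈ (L : Set V)
  rw [hself]
  intro x hx
  obtain ⟨n, hn⟩ := heven x hx
  exact ⟨n, by rw [map_smul, LinearMap.smul_apply, hn, smul_eq_mul]; ring⟩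

lemma exists_two_smul_orbitAverage_eq (hfg : L.FG)
    (hint : ∀ x ∈ L, ∀ y ∈ L, ∃ n : ℤ, B x y = (n : ℚ))
    (hself : (L : Set V) = {x | ∀ y ∈ L, ∃ n : ℤ, B x y = (n : ℚ)})
    (hiso : ∀ x y, B (ν x) (ν y) = B x y) (hνL : ∀ x ∈ L, ν x ∈ L) (hm : m ≠ 0)
    (hord : ν ^ m = 1) (hLν : ∀ z, z ∈ Lν ↔ z ∈ L ∧ ν z = z)
    {f : Lν →+ EuclideanSpace ℝ (Fin 12)} (hf : IsIsometryToSqrtTwoD12plus B Lν f)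
    {y : V} (hy : y ∈ Lν) : ∃ x ∈ L, (2 : ℚ) • ν.orbitAverage m x = y := by
  have hm' : (m : ℚ) ≠ 0 := by exact_mod_cast hm
  have := IsAddTorsionFree.of_module_rat V
  have : Module.Finite ℤ Lν :=
    Module.Finite.iff_fg.mpr (hfg.of_le fun z hz => ((hLν z).mp hz).1)
  let T : Submodule ℤ Lν :=
    (L.map (((2 : ℚ) • ν.orbitAverage m).restrictScalars ℤ)).comap Lν.subtype
  suffices T = ⊤ from (this ▸ Submodule.mem_top : (⟨y, hy⟩ : Lν) ∈ T)
  refine Submodule.eq_top_of_forall_dvd_imp_mem 2 hf.halfForm T ?_ fun w hw => ?_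
  · rintro _ ⟨w, rfl⟩
    have hw := (hLν w).mp w.2
    exact ⟨w, hw.1, by simp [LinearEquiv.orbitAverage_eq_self hm' hw.2, two_smul]⟩
  · have hwx (x : V) (hx : x ∈ L) : ∃ n : ℤ, B w x = 2 * n := by
      have hPx := two_smul_orbitAverage_mem hint hiso hνL hm hord hLν hf hx
      obtain ⟨n, hn⟩ := hw ⟨_, hPx⟩ ⟨x, hx, rfl⟩
      have hPw := LinearEquiv.orbitAverage_apply_left B.flip (fun x y => hiso y x) hm' x
        ((hLν w).mp w.2).2
      refine ⟨n, ?_⟩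
      have := hf.halfForm_apply w ⟨_, hPx⟩
      simp only [hn, LinearMap.map_smul, LinearMap.flip_apply, smul_eq_mul] at this hPw
      push_cast at this
      rw [← hPw]
      linarith
    have half := inv_two_smul_mem_of_forall_exists_eq_two_mul hself hLν w.2 hwx
    exact ⟨⟨_, half⟩, Subtype.ext (by simp [← Int.cast_smul_eq_zsmul ℚ, smul_smul])⟩

end FixedLattice

end RationalLattice

theorem projection_eq_half_fixed_lattice_general
    (V : Type*) [AddCommGroup V] [Module ℚ V]
    (B : V →ₗ[ℚ] V →ₗ[ℚ] ℚ)
    (L : Submodule ℤ V) (hfg : L.FG)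
    (hint : ∀ x ∈ L, ∀ y ∈ L, ∃ n : ℤ, B x y = (n : ℚ))
    (hself : (L : Set V) = {x | ∀ y ∈ L, ∃ n : ℤ, B x y = (n : ℚ)})
    (ν : V ≃ₗ[ℚ] V) (hiso : ∀ x y, B (ν x) (ν y) = B x y)
    (hνL : ∀ x, x ∈ L ↔ ν x ∈ L)
    (m : ℕ) (hmpos : 0 < m) (hord : ∀ x, (ν ^ m) x = x)
    (Lν : Submodule ℤ V) (hLν : (Lν : Set V) = {x | x ∈ L ∧ ν x = x})
    (f : Lν →+ EuclideanSpace ℝ (Fin 12))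
    (hfinj : Function.Injective f) (hfrange : Set.range f = D12plus)
    (hform : ∀ x y : Lν, ((B (x : V) (y : V) : ℚ) : ℝ) = 2 * ⟪f x, f y⟫) :
    (fun v => (m : ℚ)⁻¹ • ∑ k ∈ Finset.range m, (ν ^ k) v) '' (L : Set V)
      = (2 : ℚ)⁻¹ • (Lν : Set V) := by
  have hf : IsIsometryToSqrtTwoD12plus B Lν f := ⟨hfinj, hfrange, hform⟩
  have hνL' (x : V) : x ∈ L → ν x ∈ L := (hνL x).mp
  have hord' : ν ^ m = 1 := LinearEquiv.ext hord
  have hLν' (z : V) : z ∈ Lν ↔ z ∈ L ∧ ν z = z := Set.ext_iff.mp hLν z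
  simp only [← LinearEquiv.orbitAverage_apply]
  ext v
  constructor
  · rintro ⟨x, hx, rfl⟩
    refine ⟨_, two_smul_orbitAverage_mem hint hiso hνL' hmpos.ne' hord' hLν' hf hx, ?_⟩
    simp [smul_smul]
  · rintro ⟨y, hy, rfl⟩
    obtain ⟨x, hx, rfl⟩ :=
      exists_two_smul_orbitAverage_eq hfg hint hself hiso hνL' hmpos.ne' hord' hLν' hf hy
    exact ⟨x, hx, by simp [smul_smul]⟩

/-- Let `L` be a positive-definite even unimodular lattice (realised as a full ℤ-lattice in a
finite-dimensional rational vector space, unimodularity being self-duality) and `ν` an isometry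
of `L` with `ν^m = id` whose fixed-point lattice `L^ν` is isometric to `√2·D₁₂⁺`
(i.e. to `D₁₂⁺` with its form doubled). Then `π_ν(L) = (1/2)·L^ν`, where
`π_ν = (1/m) ∑_{k<m} ν^k`. -/
theorem projection_eq_half_fixed_lattice
    (V : Type*) [AddCommGroup V] [Module ℚ V] [FiniteDimensional ℚ V]
    (B : V →ₗ[ℚ] V →ₗ[ℚ] ℚ) (hsymm : ∀ x y, B x y = B y x)
    (L : Submodule ℤ V) (hfg : L.FG)
    (hspan : Submodule.span ℚ (L : Set V) = ⊤)
    (hint : ∀ x ∈ L, ∀ y ∈ L, ∃ n : ℤ, B x y = (n : ℚ))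
    (heven : ∀ x ∈ L, ∃ n : ℤ, B x x = 2 * (n : ℚ))
    (hpos : ∀ x ∈ L, x ≠ 0 → 0 < B x x)
    (hself : (L : Set V) = {x | ∀ y ∈ L, ∃ n : ℤ, B x y = (n : ℚ)})
    (ν : V ≃ₗ[ℚ] V) (hiso : ∀ x y, B (ν x) (ν y) = B x y)
    (hνL : ∀ x, x ∈ L ↔ ν x ∈ L)
    (m : ℕ) (hmpos : 0 < m) (hord : ∀ x, (ν ^ m) x = x)
    (Lν : Submodule ℤ V) (hLν : (Lν : Set V) = {x | x ∈ L ∧ ν x = x})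
    (f : Lν →+ EuclideanSpace ℝ (Fin 12))
    (hfinj : Function.Injective f) (hfrange : Set.range f = D12plus)
    (hform : ∀ x y : Lν, ((B (x : V) (y : V) : ℚ) : ℝ) = 2 * ⟪f x, f y⟫) :
    (fun v => (m : ℚ)⁻¹ • ∑ k ∈ Finset.range m, (ν ^ k) v) '' (L : Set V)
      = (2 : ℚ)⁻¹ • (Lν : Set V) :=
  projection_eq_half_fixed_lattice_general V B L hfg hint hself ν hiso hνL m hmpos hord Lν hLν f
    hfinj hfrange hform
end
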